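/- Assume the representation is regular with γ(Ṽ) ≥ 1 and satisfies the growth condition. Then H = [W]_Ṽ + R^∞(V), i.e. every h ∈ H can be written as h = x + y with x ∈ [W]_Ṽ and y ∈ R^∞(V). -/

import Mathlib

open scoped InnerProductSpace

noncomputable section

variable (H : Type) [NormedAddCommGroup H] [InnerProductSpace ℂ H]

/-- Words of length `n` in the alphabet `{1,…,d}`. -/
abbrev Word (d n : ℕ) := Fin n → Fin d

/-- `H_n`: the ℓ²-direct sum of copies of `H` indexed by words of length `n`. -/
abbrev Hn (d n : ℕ) := PiLp 2 (fun _ : Word d n => H)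

instance instHnCompleteSpace [CompleteSpace H] (d n : ℕ) : CompleteSpace (Hn H d n) :=
  ((PiLp.continuousLinearEquiv 2 ℂ (fun _ : Word d n => H)).isUniformEmbedding.completeSpace_congr
    (PiLp.continuousLinearEquiv 2 ℂ (fun _ : Word d n => H)).surjective).mpr inferInstance

/-- The coordinate projection `H_m → H` at the word `α`. -/
def coord (d m : ℕ) (α : Word d m) : Hn H d m →L[ℂ] H :=
  PiLp.proj 2 (fun _ : Word d m => H) α

/-- The embedding `H → H_n` into the coordinate at the word `α`. -/
def singleCLM (d n : ℕ) (α : Word d n) : H →L[ℂ] Hn H d n :=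
  ((PiLp.continuousLinearEquiv 2 ℂ (fun _ : Word d n => H)).symm.toContinuousLinearMap).comp
    (ContinuousLinearMap.pi (fun β : Word d n =>
      if β = α then ContinuousLinearMap.id ℂ H else 0))

/-- `V_α := V_{α_1} ∘ ⋯ ∘ V_{α_n}` for a word `α`. -/
def Vword {d : ℕ} (V : Fin d → H →L[ℂ] H) : (n : ℕ) → Word d n → (H →L[ℂ] H)
  | 0, _ => ContinuousLinearMap.id ℂ H
  | (n + 1), α => (V (α 0)).comp (Vword V n (fun i => α i.succ))

/-- `Ṽ_n : H_n → H`, `Ṽ_n((h_α)_α) = Σ_α V_α h_α`. -/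
def Vtilde {d : ℕ} (V : Fin d → H →L[ℂ] H) (n : ℕ) : Hn H d n →L[ℂ] H :=
  ∑ α : Word d n, (Vword H V n α).comp (coord H d n α)

/-- Extraction of the `α`-block: `H_{n+j} → H_j`. -/
def blockIn (d n j : ℕ) (α : Word d n) : Hn H d (n + j) →L[ℂ] Hn H d j :=
  ((PiLp.continuousLinearEquiv 2 ℂ (fun _ : Word d j => H)).symm.toContinuousLinearMap).comp
    (ContinuousLinearMap.pi (fun γ : Word d j => coord H d (n + j) (Fin.append α γ)))

/-- Insertion of the `α`-block: `H_k → H_{n+k}`. -/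
def blockOut (d n k : ℕ) (α : Word d n) : Hn H d k →L[ℂ] Hn H d (n + k) :=
  ((PiLp.continuousLinearEquiv 2 ℂ (fun _ : Word d (n + k) => H)).symm.toContinuousLinearMap).comp
    (ContinuousLinearMap.pi (fun β : Word d (n + k) =>
      if (fun i : Fin n => β (Fin.castAdd k i)) = α then
        coord H d k (fun i : Fin k => β (Fin.natAdd n i)) else 0))

/-- The amplification `I_{E^{⊗n}} ⊗ R : H_{n+j} → H_n` of a map `R : H_j → H`. -/
def ampV (d n j : ℕ) (R : Hn H d j →L[ℂ] H) : Hn H d (n + j) →L[ℂ] Hn H d n :=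
  ∑ α : Word d n, (singleCLM H d n α).comp (R.comp (blockIn H d n j α))

/-- The amplification `I_{E^{⊗n}} ⊗ S : H_n → H_{n+k}` of a map `S : H → H_k`. -/
def ampS (d n k : ℕ) (S : H →L[ℂ] Hn H d k) : Hn H d n →L[ℂ] Hn H d (n + k) :=
  ∑ α : Word d n, (blockOut H d n k α).comp (S.comp (coord H d n α))

/-- The amplification `I_{E^{⊗n}} ⊗ T : H_n → H_n` of a map `T : H → H`. -/
def ampHH (d n : ℕ) (T : H →L[ℂ] H) : Hn H d n →L[ℂ] Hn H d n :=
  ∑ α : Word d n, (singleCLM H d n α).comp (T.comp (coord H d n α))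

/-- The amplification `I_{E^{⊗n}} ⊗ R : H_{n+j} → H_{n+k}` of a map `R : H_j → H_k`. -/
def ampGen (d n j k : ℕ) (R : Hn H d j →L[ℂ] Hn H d k) :
    Hn H d (n + j) →L[ℂ] Hn H d (n + k) :=
  ∑ α : Word d n, (blockOut H d n k α).comp (R.comp (blockIn H d n j α))

/-- The iterates `S^{(n)} : H → H_n` of a map `S : H → H_1`:
`S^{(0)} = I_H` and `S^{(n+1)} = (I_{E^{⊗n}} ⊗ S) ∘ S^{(n)}`. -/
def Siter {d : ℕ} (S : H →L[ℂ] Hn H d 1) : (n : ℕ) → (H →L[ℂ] Hn H d n)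
  | 0 => singleCLM H d 0 (fun i => i.elim0)
  | (n + 1) => (ampS H d n 1 S).comp (Siter S n)

/-- The generalized range `R^∞(V) = ⋂_{n ≥ 1} ran Ṽ_n`. -/
def Rinf {d : ℕ} (V : Fin d → H →L[ℂ] H) : Submodule ℂ H :=
  ⨅ (n : ℕ) (_ : 1 ≤ n), LinearMap.range (Vtilde H V n).toLinearMap

/-- `H_n(K)`: families all of whose entries lie in `K` (realizing `E^{⊗n} ⊗ K`). -/
def HnSub (d n : ℕ) (K : Submodule ℂ H) : Submodule ℂ (Hn H d n) :=
  ⨅ α : Word d n, K.comap (coord H d n α).toLinearMap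

/-- The representation is regular: `ran Ṽ` is closed and
`ker Ṽ_n ⊆ ran (I_{E^{⊗n}} ⊗ Ṽ_m)` for all `n, m ≥ 1`. -/
def RepRegular {d : ℕ} (V : Fin d → H →L[ℂ] H) : Prop :=
  IsClosed (LinearMap.range (Vtilde H V 1).toLinearMap : Set H) ∧
    ∀ n m : ℕ, 1 ≤ n → 1 ≤ m →
      LinearMap.ker (Vtilde H V n).toLinearMap ≤ LinearMap.range (ampV H d n m (Vtilde H V m)).toLinearMap

/-- The reduced minimum modulus `γ(T)`. -/
def rmm {X Y : Type*} [NormedAddCommGroup X] [InnerProductSpace ℂ X]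
    [NormedAddCommGroup Y] [InnerProductSpace ℂ Y] (T : X →L[ℂ] Y) : ℝ :=
  sInf ((fun ξ => ‖T ξ‖ / Metric.infDist ξ (LinearMap.ker T.toLinearMap : Set X)) ''
    {ξ : X | ξ ∉ LinearMap.ker T.toLinearMap})

/-- The cast `H_m → H_k` along an equality `m = k` of word lengths. -/
def castHn (d : ℕ) {m k : ℕ} (h : m = k) : Hn H d m →L[ℂ] Hn H d k := by
  subst h; exact ContinuousLinearMap.id ℂ _

/-- `E^{⊗j} ⊙ K ⊆ H_{j+1}`: families all of whose `1`-blocks lie in `K ⊆ H_1`. -/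
def odotSub (d j : ℕ) (K : Submodule ℂ (Hn H d 1)) : Submodule ℂ (Hn H d (j + 1)) :=
  ⨅ α : Word d j, K.comap (blockIn H d j 1 α).toLinearMap

end

/-!
Let `S = Ṽ†` and `ξₙ = S⁽ⁿ⁾ h`. Since `x - ṼS x ∈ W` for every `x`, applying this blockwise gives
`Ṽₙ ξₙ - Ṽₙ₊₁ ξₙ₊₁ ∈ Ṽₙ(Hₙ(W))`, so `h - Ṽₙ ξₙ ∈ [W]_Ṽ` for all `n`. The condition `γ(Ṽ) ≥ 1`
makes `S` a contraction, so `aₙ = ‖ξₙ‖²` decreases, and the growth condition reads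
`‖Ṽₙ₊₁ ξₙ₊₁‖² ≤ dₙ₊₁ (aₙ - aₙ₊₁) + aₙ₊₁`. As `Σ 1/dₙ = ∞` while `Σ (aₙ - aₙ₊₁) < ∞`, infinitely
many `Ṽₙ ξₙ` have norm at most `(‖h‖² + 1)^{1/2}`. Regularity makes every `ran Ṽₙ` closed, so the
nested bounded closed convex sets `{z ∈ ran Ṽₙ : h - z ∈ [W]_Ṽ}` share a point `y ∈ R^∞(V)`,
and `h = (h - y) + y`.
-/

open Filter

theorem summable_sub_succ_of_antitone {a : ℕ → ℝ} (ha : Antitone a) (ha0 : ∀ n, 0 ≤ a n) :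
    Summable fun n => a n - a (n + 1) :=
  summable_of_sum_range_le (fun n => sub_nonneg.2 (ha n.le_succ)) fun n => by
    rw [Finset.sum_range_sub']
    linarith [ha0 n]

theorem frequently_le_of_not_summable_inv {a b c : ℕ → ℝ} (ha : Antitone a) (ha0 : ∀ n, 0 ≤ a n)
    (hc : ∀ n, 0 < c n) (hdiv : ¬ Summable fun n => 1 / c n)
    (hb : ∀ n, b n ≤ c n * (a n - a (n + 1)) + a (n + 1)) :
    ∃ᶠ n in atTop, b n ≤ a 0 + 1 := fun hev => by
  refine hdiv ((summable_sub_succ_of_antitone ha ha0).of_norm_bounded_eventually_nat ?_)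
  filter_upwards [hev] with n hn
  rw [Real.norm_of_nonneg (one_div_pos.2 (hc n)).le, div_le_iff₀ (hc n)]
  linarith [hb n, ha (Nat.zero_le (n + 1)), not_le.1 hn]

section MinimalNorm

variable {F : Type*} [NormedAddCommGroup F] [InnerProductSpace ℝ F]

theorem exists_mem_forall_norm_le [CompleteSpace F] {D : Set F} (hne : D.Nonempty)
    (hcl : IsClosed D) (hcv : Convex ℝ D) : ∃ v ∈ D, ∀ z ∈ D, ‖v‖ ≤ ‖z‖ := by
  obtain ⟨v, hv, hmin⟩ := exists_norm_eq_iInf_of_complete_convex hne hcl.isComplete hcv 0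
  refine ⟨v, hv, fun z hz => ?_⟩
  have := ciInf_le (f := fun w : D => ‖0 - (w : F)‖) ⟨0, by rintro _ ⟨w, rfl⟩; positivity⟩ ⟨z, hz⟩
  rwa [← hmin, zero_sub, norm_neg, zero_sub, norm_neg] at this

theorem norm_sub_sq_le_of_forall_norm_le {D : Set F} (hD : Convex ℝ D) {v w : F} (hv : v ∈ D)
    (hw : w ∈ D) (hmin : ∀ z ∈ D, ‖v‖ ≤ ‖z‖) : ‖v - w‖ ^ 2 ≤ 2 * (‖w‖ ^ 2 - ‖v‖ ^ 2) := by
  have hmid : ‖v‖ ≤ ‖v + w‖ / 2 := by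
    have := hmin _ (hD hv hw (by norm_num : (0 : ℝ) ≤ 2⁻¹) (by norm_num : (0 : ℝ) ≤ 2⁻¹)
      (by norm_num))
    rwa [← smul_add, norm_smul, Real.norm_of_nonneg (by norm_num), inv_mul_eq_div] at this
  have hpar := parallelogram_law_with_norm ℝ v w
  nlinarith [norm_nonneg v]

theorem exists_mem_iInter_of_antitone_convex [CompleteSpace F] {D : ℕ → Set F} (hD : Antitone D)
    (hcl : ∀ n, IsClosed (D n)) (hcv : ∀ n, Convex ℝ (D n)) {C : ℝ}
    (hne : ∀ n, ∃ z ∈ D n, ‖z‖ ≤ C) : ∃ y, ∀ n, y ∈ D n := by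
  choose y hyD hy using fun n =>
    exists_mem_forall_norm_le ((hne n).imp fun _ h => h.1) (hcl n) (hcv n)
  have hmono : Monotone fun n => ‖y n‖ ^ 2 := fun n m hnm =>
    pow_le_pow_left₀ (norm_nonneg _) (hy n _ (hD hnm (hyD m))) 2
  have hbdd : BddAbove (Set.range fun n => ‖y n‖ ^ 2) := ⟨C ^ 2, by
    rintro _ ⟨n, rfl⟩
    obtain ⟨z, hz, hzC⟩ := hne n
    exact pow_le_pow_left₀ (norm_nonneg _) ((hy n z hz).trans hzC) 2⟩
  have hcauchy : CauchySeq y := by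
    refine Metric.cauchySeq_iff'.2 fun ε hε => ?_
    obtain ⟨N, hN⟩ := Metric.cauchySeq_iff'.1 (tendsto_atTop_ciSup hmono hbdd).cauchySeq
      (ε ^ 2 / 2) (by positivity)
    refine ⟨N, fun n hn => lt_of_pow_lt_pow_left₀ 2 hε.le ?_⟩
    have h1 := norm_sub_sq_le_of_forall_norm_le (hcv N) (hyD N) (hD hn (hyD n)) (hy N)
    have h2 := hN n hn
    rw [Real.dist_eq, abs_sub_lt_iff] at h2
    rw [dist_eq_norm, norm_sub_rev]
    linarith
  obtain ⟨y₀, hy₀⟩ := cauchySeq_tendsto_of_complete hcauchy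
  exact ⟨y₀, fun n => (hcl n).mem_of_tendsto hy₀
    ((eventually_ge_atTop n).mono fun m hm => hD hm (hyD m))⟩

end MinimalNorm

section Operators

variable {X Y : Type*} [NormedAddCommGroup X] [InnerProductSpace ℂ X]
  [NormedAddCommGroup Y] [InnerProductSpace ℂ Y]

theorem infDist_eq_norm_of_mem_orthogonal {K : Submodule ℂ X} {ξ : X} (hξ : ξ ∈ Kᗮ) :
    Metric.infDist ξ K = ‖ξ‖ := by
  refine le_antisymm (by simpa using Metric.infDist_le_dist_of_mem K.zero_mem (x := ξ)) ?_
  refine (Metric.le_infDist ⟨0, K.zero_mem⟩).2 fun k hk => ?_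
  have hpyth := norm_add_sq_eq_norm_sq_add_norm_sq_of_inner_eq_zero (𝕜 := ℂ) ξ (-k)
    (by rw [inner_neg_right, Submodule.inner_left_of_mem_orthogonal hk hξ, neg_zero])
  rw [dist_eq_norm, sub_eq_add_neg]
  nlinarith [norm_nonneg (ξ + -k), norm_nonneg ξ, norm_nonneg (-k)]

theorem norm_le_norm_apply_of_one_le_rmm {T : X →L[ℂ] Y} (hT : 1 ≤ rmm T) {ξ : X}
    (hξ : ξ ∈ (LinearMap.ker T.toLinearMap)ᗮ) : ‖ξ‖ ≤ ‖T ξ‖ := by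
  rcases eq_or_ne ξ 0 with rfl | hne
  · simp
  have hker : ξ ∉ LinearMap.ker T.toLinearMap := fun h =>
    hne (inner_self_eq_zero.1 (Submodule.inner_right_of_mem_orthogonal h hξ))
  have hle : rmm T ≤ ‖T ξ‖ / ‖ξ‖ := by
    rw [← infDist_eq_norm_of_mem_orthogonal hξ]
    refine csInf_le ⟨0, ?_⟩ ⟨ξ, hker, rfl⟩
    rintro _ ⟨η, -, rfl⟩
    exact div_nonneg (norm_nonneg _) Metric.infDist_nonneg
  exact (one_le_div₀ (norm_pos_iff.2 hne)).1 (hT.trans hle)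

theorem isClosed_image_of_ker_le [CompleteSpace X] [CompleteSpace Y] (T : X →L[ℂ] Y)
    (hT : IsClosed (LinearMap.range T.toLinearMap : Set Y)) {N : Submodule ℂ X}
    (hN : IsClosed (N : Set X)) (hker : LinearMap.ker T.toLinearMap ≤ N) :
    IsClosed (T '' N) := by
  have : CompleteSpace (LinearMap.range T.toLinearMap) := hT.completeSpace_coe
  set T' := T.codRestrict (LinearMap.range T.toLinearMap) (LinearMap.mem_range_self T.toLinearMap)
  have hsurj : Function.Surjective T' := fun ⟨_, x, rfl⟩ => ⟨x, rfl⟩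
  -- `N` is a union of fibres of `T`, so `T' '' N` is the complement of the open set `T' '' Nᶜ`
  have hcompl : T' '' N = (T' '' (N : Set X)ᶜ)ᶜ := by
    ext y
    obtain ⟨x, rfl⟩ := hsurj y
    constructor
    · rintro ⟨x', hx', hTx'⟩ ⟨x'', hx'', hTx''⟩
      refine hx'' ?_
      have hT : T x'' = T x' := congrArg Subtype.val (hTx''.trans hTx'.symm)
      have : x'' - x' ∈ LinearMap.ker T.toLinearMap := by simp [hT]
      simpa using N.add_mem (hker this) hx'
    · intro h
      by_contra h'
      exact h ⟨x, fun hx => h' ⟨x, hx, rfl⟩, rfl⟩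
  have hclosed : IsClosed (T' '' N) :=
    hcompl ▸ ((T'.isOpenMap hsurj) _ hN.isOpen_compl).isClosed_compl
  rw [show T '' N = Subtype.val '' (T' '' N) by rw [Set.image_image]; rfl]
  exact hT.isClosedEmbedding_subtypeVal.isClosedMap _ hclosed

end Operators

section MoorePenrose

variable {X Y : Type*} [NormedAddCommGroup X] [InnerProductSpace ℂ X]
  [NormedAddCommGroup Y] [InnerProductSpace ℂ Y]
  {T : X →L[ℂ] Y} {S : Y →L[ℂ] X}

theorem norm_comp_le_one_of_moorePenrose [CompleteSpace Y] (hTST : T.comp (S.comp T) = T)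
    (hTS : IsSelfAdjoint (T.comp S)) : ‖T.comp S‖ ≤ 1 :=
  IsStarProjection.norm_le _ ⟨by
    change (T.comp S).comp (T.comp S) = T.comp S
    rw [← ContinuousLinearMap.comp_assoc, ContinuousLinearMap.comp_assoc T, hTST], hTS⟩

theorem apply_mem_orthogonal_ker_of_moorePenrose [CompleteSpace X] (hSTS : S.comp (T.comp S) = S)
    (hST : IsSelfAdjoint (S.comp T)) (y : Y) : S y ∈ (LinearMap.ker T.toLinearMap)ᗮ := by
  intro k hk
  have hk : T k = 0 := hk
  have hSy : S.comp T (S y) = S y := congrArg (· y) hSTS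
  calc ⟪k, S y⟫_ℂ = ⟪k, S.comp T (S y)⟫_ℂ := by rw [hSy]
    _ = ⟪S.comp T k, S y⟫_ℂ := (hST.isSymmetric k (S y)).symm
    _ = 0 := by simp [hk]

theorem sub_mem_orthogonal_range_of_moorePenrose [CompleteSpace Y] (hTST : T.comp (S.comp T) = T)
    (hTS : IsSelfAdjoint (T.comp S)) (y : Y) :
    y - T (S y) ∈ (LinearMap.range T.toLinearMap)ᗮ := by
  rintro _ ⟨x, rfl⟩
  have hsymm : ⟪T.comp S (T x), y⟫_ℂ = ⟪T x, T.comp S y⟫_ℂ := hTS.isSymmetric (T x) y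
  have hTx : T.comp S (T x) = T x := congrArg (· x) hTST
  rw [hTx] at hsymm
  simp [inner_sub_right, hsymm]

theorem norm_le_one_of_moorePenrose [CompleteSpace X] [CompleteSpace Y] (hγ : 1 ≤ rmm T)
    (hTST : T.comp (S.comp T) = T) (hSTS : S.comp (T.comp S) = S) (hTS : IsSelfAdjoint (T.comp S))
    (hST : IsSelfAdjoint (S.comp T)) : ‖S‖ ≤ 1 :=
  S.opNorm_le_bound zero_le_one fun y => calc
    ‖S y‖ ≤ ‖T.comp S y‖ :=
        norm_le_norm_apply_of_one_le_rmm hγ (apply_mem_orthogonal_ker_of_moorePenrose hSTS hST y)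
    _ ≤ 1 * ‖y‖ := (T.comp S).le_of_opNorm_le (norm_comp_le_one_of_moorePenrose hTST hTS) y

end MoorePenrose

theorem mem_sup_iInf_of_forall_exists {X : Type*} [NormedAddCommGroup X] [InnerProductSpace ℂ X]
    [CompleteSpace X] {M : Submodule ℂ X} (hM : IsClosed (M : Set X)) {R : ℕ → Submodule ℂ X}
    (hR : Antitone R) (hRc : ∀ n, IsClosed (R n : Set X)) {x : X} {C : ℝ}
    (h : ∀ n, ∃ z ∈ R n, x - z ∈ M ∧ ‖z‖ ≤ C) : x ∈ M ⊔ ⨅ n, R n := by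
  let _ : InnerProductSpace ℝ X := InnerProductSpace.rclikeToReal ℂ X
  have hcoset : {z | x - z ∈ M} = (fun z => -x + z) ⁻¹' M := by
    ext z
    simp [← sub_eq_neg_add, sub_mem_comm_iff]
  obtain ⟨y, hy⟩ := exists_mem_iInter_of_antitone_convex (D := fun n => {z | x - z ∈ M} ∩ R n)
    (fun n m hnm => Set.inter_subset_inter_right _ (hR hnm))
    (fun n => (hcoset ▸ hM.preimage (continuous_const.add continuous_id)).inter (hRc n))
    (fun n => (hcoset ▸ (M.restrictScalars ℝ).convex.translate_preimage_right (-x)).inter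
      ((R n).restrictScalars ℝ).convex)
    (fun n => (h n).imp fun z hz => ⟨⟨hz.2.1, hz.1⟩, hz.2.2⟩)
  rw [← sub_add_cancel x y]
  exact Submodule.add_mem_sup (hy 0).1 (Submodule.mem_iInf _ |>.2 fun n => (hy n).2)

section Blocks

variable {H : Type} [NormedAddCommGroup H] [InnerProductSpace ℂ H] {d : ℕ}

@[simp]
theorem coord_apply {m : ℕ} (α : Word d m) (ξ : Hn H d m) : coord H d m α ξ = ξ α := rfl

@[simp]
theorem singleCLM_apply {n : ℕ} (α β : Word d n) (h : H) :
    singleCLM H d n α h β = if β = α then h else 0 := by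
  simp [singleCLM, ContinuousLinearMap.pi, apply_ite (fun T : H →L[ℂ] H => T h)]

@[simp]
theorem blockIn_apply {n j : ℕ} (α : Word d n) (ξ : Hn H d (n + j)) (γ : Word d j) :
    blockIn H d n j α ξ γ = ξ (Fin.append α γ) := rfl

@[simp]
theorem blockOut_apply {n k : ℕ} (α : Word d n) (η : Hn H d k) (β : Word d (n + k)) :
    blockOut H d n k α η β =
      if (fun i => β (Fin.castAdd k i)) = α then η fun i => β (Fin.natAdd n i) else 0 := by
  simp [blockOut, ContinuousLinearMap.pi, apply_ite (fun T : Hn H d k →L[ℂ] H => T η)]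

theorem Vtilde_apply {n : ℕ} (V : Fin d → H →L[ℂ] H) (ξ : Hn H d n) :
    Vtilde H V n ξ = ∑ α, Vword H V n α (ξ α) := by
  simp [Vtilde]

@[simp]
theorem ampV_apply {n j : ℕ} (R : Hn H d j →L[ℂ] H) (ξ : Hn H d (n + j)) (α : Word d n) :
    ampV H d n j R ξ α = R (blockIn H d n j α ξ) := by
  simp [ampV]

@[simp]
theorem ampS_apply {n k : ℕ} (S : H →L[ℂ] Hn H d k) (ξ : Hn H d n) (β : Word d (n + k)) :
    ampS H d n k S ξ β = S (ξ fun i => β (Fin.castAdd k i)) fun i => β (Fin.natAdd n i) := by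
  simp [ampS]

@[simp]
theorem ampHH_apply {n : ℕ} (T : H →L[ℂ] H) (ξ : Hn H d n) (α : Word d n) :
    ampHH H d n T ξ α = T (ξ α) := by
  simp [ampHH]

@[simp]
theorem ampGen_apply {n j k : ℕ} (R : Hn H d j →L[ℂ] Hn H d k) (ξ : Hn H d (n + j))
    (β : Word d (n + k)) :
    ampGen H d n j k R ξ β =
      R (blockIn H d n j (fun i => β (Fin.castAdd k i)) ξ) fun i => β (Fin.natAdd n i) := by
  simp [ampGen]

theorem Vword_snoc (V : Fin d → H →L[ℂ] H) :
    ∀ (n : ℕ) (α : Word d n) (a : Fin d),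
      Vword H V (n + 1) (Fin.snoc α a) = (Vword H V n α).comp (V a)
  | 0, _, _ => rfl
  | n + 1, α, a => by
    rw [← Fin.cons_self_tail α, ← Fin.cons_snoc_eq_snoc_cons]
    change (V (α 0)).comp (Vword H V (n + 1) (Fin.snoc (Fin.tail α) a)) =
      ((V (α 0)).comp (Vword H V n (Fin.tail α))).comp (V a)
    rw [Vword_snoc V n]
    rfl

theorem Vtilde_succ (V : Fin d → H →L[ℂ] H) (n : ℕ) :
    Vtilde H V (n + 1) = (Vtilde H V n).comp (ampV H d n 1 (Vtilde H V 1)) := by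
  ext ξ
  simp only [ContinuousLinearMap.comp_apply, Vtilde_apply, ampV_apply, map_sum]
  rw [← (Fin.appendEquiv n 1).sum_comp, Fintype.sum_prod_type]
  refine Finset.sum_congr rfl fun α _ => Finset.sum_congr rfl fun γ _ => ?_
  change Vword H V (n + 1) (Fin.append α γ) (ξ (Fin.append α γ)) = _
  rw [blockIn_apply, Fin.append_right_eq_snoc, Vword_snoc]
  rfl

@[simp]
theorem blockIn_ampS {n k : ℕ} (S : H →L[ℂ] Hn H d k) (ξ : Hn H d n) (α : Word d n) :
    blockIn H d n k α (ampS H d n k S ξ) = S (ξ α) := by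
  ext γ
  simp [Fin.append_left, Fin.append_right]

theorem ampV_comp_ampS {n : ℕ} (R : Hn H d 1 →L[ℂ] H) (S : H →L[ℂ] Hn H d 1) :
    (ampV H d n 1 R).comp (ampS H d n 1 S) = ampHH H d n (R.comp S) := by
  ext ξ α
  simp

theorem ampGen_comp_ampS {n : ℕ} (Q : Hn H d 1 →L[ℂ] Hn H d 1) (S : H →L[ℂ] Hn H d 1) :
    (ampGen H d n 1 1 Q).comp (ampS H d n 1 S) = ampS H d n 1 (Q.comp S) := by
  ext ξ β
  simp

theorem norm_sq_eq_sum_norm_blockIn_sq {n k : ℕ} (ξ : Hn H d (n + k)) :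
    ‖ξ‖ ^ 2 = ∑ α, ‖blockIn H d n k α ξ‖ ^ 2 := by
  simp only [PiLp.norm_sq_eq_of_L2, blockIn_apply]
  rw [← (Fin.appendEquiv n k).sum_comp, Fintype.sum_prod_type]
  rfl

theorem norm_ampS_le {n k : ℕ} (S : H →L[ℂ] Hn H d k) (ξ : Hn H d n) :
    ‖ampS H d n k S ξ‖ ≤ ‖S‖ * ‖ξ‖ := by
  refine le_of_sq_le_sq ?_ (by positivity)
  rw [norm_sq_eq_sum_norm_blockIn_sq, mul_pow, PiLp.norm_sq_eq_of_L2, Finset.mul_sum]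
  refine Finset.sum_le_sum fun α _ => ?_
  rw [blockIn_ampS, ← mul_pow]
  exact pow_le_pow_left₀ (norm_nonneg _) (S.le_opNorm _) 2

theorem norm_ampHH_le {n : ℕ} (T : H →L[ℂ] H) (ξ : Hn H d n) :
    ‖ampHH H d n T ξ‖ ≤ ‖T‖ * ‖ξ‖ := by
  refine le_of_sq_le_sq ?_ (by positivity)
  rw [PiLp.norm_sq_eq_of_L2, mul_pow, PiLp.norm_sq_eq_of_L2, Finset.mul_sum]
  refine Finset.sum_le_sum fun α _ => ?_
  rw [ampHH_apply, ← mul_pow]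
  exact pow_le_pow_left₀ (norm_nonneg _) (T.le_opNorm _) 2

theorem mem_HnSub {n : ℕ} {K : Submodule ℂ H} {ξ : Hn H d n} :
    ξ ∈ HnSub H d n K ↔ ∀ α, ξ α ∈ K := by
  simp [HnSub]

theorem isClosed_HnSub {n : ℕ} {K : Submodule ℂ H} (hK : IsClosed (K : Set H)) :
    IsClosed (HnSub H d n K : Set (Hn H d n)) := by
  have : (HnSub H d n K : Set (Hn H d n)) = ⋂ α, coord H d n α ⁻¹' K := by
    ext ξ
    simp [mem_HnSub]
  rw [this]
  exact isClosed_iInter fun α => hK.preimage (coord H d n α).continuous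

theorem blockIn_blockOut {n k : ℕ} (α α' : Word d n) (ζ : Hn H d k) :
    blockIn H d n k α (blockOut H d n k α' ζ) = if α' = α then ζ else 0 := by
  ext γ
  by_cases h : α' = α
  · simp [h, Fin.append_left, Fin.append_right]
  · simp [h, Ne.symm h, Fin.append_left]

theorem range_ampV {n : ℕ} (R : Hn H d 1 →L[ℂ] H) :
    LinearMap.range (ampV H d n 1 R).toLinearMap = HnSub H d n (LinearMap.range R.toLinearMap) := by
  refine le_antisymm ?_ fun η hη => ?_
  · rintro _ ⟨ξ, rfl⟩
    exact mem_HnSub.2 fun α => by simp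
  · choose ζ hζ using mem_HnSub.1 hη
    refine ⟨∑ α, blockOut H d n 1 α (ζ α), ?_⟩
    ext α
    simpa [blockIn_blockOut, apply_ite R] using hζ α

end Blocks

section Ranges

variable {H : Type} [NormedAddCommGroup H] [InnerProductSpace ℂ H] {d : ℕ}
  (V : Fin d → H →L[ℂ] H)

theorem range_Vtilde_succ (n : ℕ) :
    LinearMap.range (Vtilde H V (n + 1)).toLinearMap =
      (HnSub H d n (LinearMap.range (Vtilde H V 1).toLinearMap)).map
        (Vtilde H V n).toLinearMap := by
  rw [Vtilde_succ, ContinuousLinearMap.toLinearMap_comp, LinearMap.range_comp, range_ampV]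

theorem range_Vtilde_antitone : Antitone fun n => LinearMap.range (Vtilde H V n).toLinearMap :=
  antitone_nat_of_succ_le fun n => by
    rw [range_Vtilde_succ]
    exact LinearMap.map_le_range

theorem isClosed_range_Vtilde [CompleteSpace H] (hreg : RepRegular H V) (n : ℕ) :
    IsClosed (LinearMap.range (Vtilde H V (n + 1)).toLinearMap : Set H) := by
  induction n with
  | zero => exact hreg.1
  | succ n ih =>
    rw [range_Vtilde_succ, Submodule.map_coe]
    refine isClosed_image_of_ker_le _ ih (isClosed_HnSub hreg.1) ?_
    simpa [range_ampV] using hreg.2 (n + 1) 1 n.succ_pos le_rfl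

theorem Rinf_eq_iInf : Rinf H V = ⨅ n, LinearMap.range (Vtilde H V (n + 1)).toLinearMap := by
  refine le_antisymm (le_iInf fun n => iInf₂_le (n + 1) n.succ_pos) (le_iInf₂ fun n hn => ?_)
  obtain ⟨m, rfl⟩ := Nat.exists_eq_add_of_le' hn
  exact iInf_le _ m

end Ranges

section Iterates

variable {H : Type} [NormedAddCommGroup H] [InnerProductSpace ℂ H] {d : ℕ}
  (V : Fin d → H →L[ℂ] H) (S : H →L[ℂ] Hn H d 1) (h : H)

theorem Vtilde_zero_Siter_zero : Vtilde H V 0 (Siter H S 0 h) = h := by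
  simp [Vtilde_apply, Siter, Vword, eq_iff_true_of_subsingleton]

theorem ampV_Siter_succ (R : Hn H d 1 →L[ℂ] H) (n : ℕ) :
    ampV H d n 1 R (Siter H S (n + 1) h) = ampHH H d n (R.comp S) (Siter H S n h) := by
  rw [Siter, ← ContinuousLinearMap.comp_apply, ← ContinuousLinearMap.comp_assoc, ampV_comp_ampS]
  rfl

theorem Vtilde_Siter_succ (n : ℕ) :
    Vtilde H V (n + 1) (Siter H S (n + 1) h) =
      Vtilde H V n (ampHH H d n ((Vtilde H V 1).comp S) (Siter H S n h)) := by
  rw [Vtilde_succ, ContinuousLinearMap.comp_apply, ampV_Siter_succ]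

theorem ampGen_Siter_succ {Q : Hn H d 1 →L[ℂ] Hn H d 1} (hQ : Q.comp S = S) (n : ℕ) :
    ampGen H d n 1 1 Q (Siter H S (n + 1) h) = Siter H S (n + 1) h := by
  rw [Siter, ← ContinuousLinearMap.comp_apply, ← ContinuousLinearMap.comp_assoc, ampGen_comp_ampS,
    hQ]

theorem norm_Siter_succ_le {S : H →L[ℂ] Hn H d 1} (hS : ‖S‖ ≤ 1) (n : ℕ) :
    ‖Siter H S (n + 1) h‖ ≤ ‖Siter H S n h‖ :=
  (norm_ampS_le S _).trans (mul_le_of_le_one_left (norm_nonneg _) hS)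

theorem sub_Vtilde_Siter_mem {K : Submodule ℂ H} (hK : ∀ x, x - Vtilde H V 1 (S x) ∈ K) (n : ℕ) :
    h - Vtilde H V n (Siter H S n h) ∈ ⨆ n, (HnSub H d n K).map (Vtilde H V n).toLinearMap := by
  induction n with
  | zero => simp [Vtilde_zero_Siter_zero]
  | succ n ih =>
    have hstep : Siter H S n h - ampHH H d n ((Vtilde H V 1).comp S) (Siter H S n h) ∈
        HnSub H d n K :=
      mem_HnSub.2 fun α => by simpa using hK _
    rw [Vtilde_Siter_succ, ← sub_add_sub_cancel h (Vtilde H V n (Siter H S n h)), ← map_sub]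
    exact add_mem ih (Submodule.mem_iSup_of_mem n ⟨_, hstep, rfl⟩)

end Iterates

theorem stmt_17_general (H : Type) [NormedAddCommGroup H] [InnerProductSpace ℂ H] [CompleteSpace H]
    (d : ℕ) (V : Fin d → H →L[ℂ] H)
    (hreg : RepRegular H V) (hγ : 1 ≤ rmm (Vtilde H V 1))
    (Vdag : H →L[ℂ] Hn H d 1)
    (mp1 : (Vtilde H V 1).comp (Vdag.comp (Vtilde H V 1)) = Vtilde H V 1)
    (mp2 : Vdag.comp ((Vtilde H V 1).comp Vdag) = Vdag)
    (mp3 : IsSelfAdjoint ((Vtilde H V 1).comp Vdag))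
    (mp4 : IsSelfAdjoint (Vdag.comp (Vtilde H V 1)))
    (dseq : ℕ → ℝ) (hdpos : ∀ m : ℕ, 1 ≤ m → 0 < dseq m)
    (hdiv : ¬ Summable (fun m : ℕ => 1 / dseq (m + 2)))
    (hgrowth : ∀ (m : ℕ) (ξ : Hn H d (m + 1)),
      ‖Vtilde H V (m + 1) ξ‖ ^ 2 ≤
        dseq (m + 1) * (‖ampV H d m 1 (Vtilde H V 1) ξ‖ ^ 2 -
            ‖ampGen H d m 1 1 (Vdag.comp (Vtilde H V 1)) ξ‖ ^ 2) +
          ‖ampGen H d m 1 1 (Vdag.comp (Vtilde H V 1)) ξ‖ ^ 2) :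
    (⨆ n : ℕ,
      Submodule.map (Vtilde H V n).toLinearMap
        (HnSub H d n ((LinearMap.range (Vtilde H V 1).toLinearMap)ᗮ))).topologicalClosure ⊔
      Rinf H V = ⊤ := by
  refine Submodule.eq_top_iff'.2 fun h => ?_
  have hVdag : ‖Vdag‖ ≤ 1 := norm_le_one_of_moorePenrose hγ mp1 mp2 mp3 mp4
  set a : ℕ → ℝ := fun n => ‖Siter H Vdag n h‖ ^ 2
  have ha : Antitone a := antitone_nat_of_succ_le fun n =>
    pow_le_pow_left₀ (norm_nonneg _) (norm_Siter_succ_le h hVdag n) 2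
  have hgrow (n : ℕ) : ‖Vtilde H V (n + 1) (Siter H Vdag (n + 1) h)‖ ^ 2 ≤
      dseq (n + 1) * (a n - a (n + 1)) + a (n + 1) := by
    have hP : ‖ampV H d n 1 (Vtilde H V 1) (Siter H Vdag (n + 1) h)‖ ^ 2 ≤ a n := by
      rw [ampV_Siter_succ]
      refine pow_le_pow_left₀ (norm_nonneg _) ((norm_ampHH_le _ _).trans ?_) 2
      exact mul_le_of_le_one_left (norm_nonneg _) (norm_comp_le_one_of_moorePenrose mp1 mp3)
    have hg := hgrowth n (Siter H Vdag (n + 1) h)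
    rw [ampGen_Siter_succ _ _ mp2] at hg
    nlinarith [hdpos (n + 1) n.succ_pos]
  have hfreq := frequently_le_of_not_summable_inv ha (fun n => sq_nonneg _)
    (fun n => hdpos (n + 1) n.succ_pos)
    (fun hs => hdiv ((summable_nat_add_iff (f := fun n => 1 / dseq (n + 1)) 1).2 hs)) hgrow
  rw [Rinf_eq_iInf]
  refine mem_sup_iInf_of_forall_exists (Submodule.isClosed_topologicalClosure _)
    ((range_Vtilde_antitone V).comp_monotone fun _ _ h => Nat.succ_le_succ h)
    (isClosed_range_Vtilde V hreg) (C := √(a 0 + 1)) fun n => ?_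
  obtain ⟨m, hm, hnm⟩ := (hfreq.and_eventually (eventually_ge_atTop n)).exists
  refine ⟨_, range_Vtilde_antitone V (Nat.succ_le_succ hnm) (LinearMap.mem_range_self _ _),
    Submodule.le_topologicalClosure _ ?_, Real.le_sqrt_of_sq_le hm⟩
  exact sub_Vtilde_Siter_mem V Vdag h (sub_mem_orthogonal_range_of_moorePenrose mp1 mp3) _

theorem stmt_17 (H : Type) [NormedAddCommGroup H] [InnerProductSpace ℂ H] [CompleteSpace H]
    (d : ℕ) (hd : 1 ≤ d) (V : Fin d → H →L[ℂ] H)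
    (hreg : RepRegular H V) (hγ : 1 ≤ rmm (Vtilde H V 1))
    (Vdag : H →L[ℂ] Hn H d 1)
    (mp1 : (Vtilde H V 1).comp (Vdag.comp (Vtilde H V 1)) = Vtilde H V 1)
    (mp2 : Vdag.comp ((Vtilde H V 1).comp Vdag) = Vdag)
    (mp3 : IsSelfAdjoint ((Vtilde H V 1).comp Vdag))
    (mp4 : IsSelfAdjoint (Vdag.comp (Vtilde H V 1)))
    (dseq : ℕ → ℝ) (hdpos : ∀ m : ℕ, 1 ≤ m → 0 < dseq m)
    (hdiv : ¬ Summable (fun m : ℕ => 1 / dseq (m + 2)))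
    (hgrowth : ∀ (m : ℕ) (ξ : Hn H d (m + 1)),
      ‖Vtilde H V (m + 1) ξ‖ ^ 2 ≤
        dseq (m + 1) * (‖ampV H d m 1 (Vtilde H V 1) ξ‖ ^ 2 -
            ‖ampGen H d m 1 1 (Vdag.comp (Vtilde H V 1)) ξ‖ ^ 2) +
          ‖ampGen H d m 1 1 (Vdag.comp (Vtilde H V 1)) ξ‖ ^ 2) :
    (⨆ n : ℕ,
      Submodule.map (Vtilde H V n).toLinearMap
        (HnSub H d n ((LinearMap.range (Vtilde H V 1).toLinearMap)ᗮ))).topologicalClosure ⊔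
      Rinf H V = ⊤ :=
  stmt_17_general H d V hreg hγ Vdag mp1 mp2 mp3 mp4 dseq hdpos hdiv hgrowth
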